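/- Let H0, H* ∈ H^stub_s(d) such that M(H0 Δ H*) consists of exactly one minimal alternating cycle C* containing the edges e1 = {a,b}_{H0,t}, e2 = {b,c}_{H*,t}, e3 = {c,d}_{H0,s}, e4 = {a,d}_{H0,s} and e5 = {a,f}_{H*,u} with a, b, c, d, f pairwise distinct. Then M(H0 Δ H*) does not contain the edge e6 = {f,c}_{H0,u}; i.e., the hyperarc (u,{f,c}) does not belong to A(H0) \ A(H*). -/

import Mathlib

open Finset

/-!
Common setting: fix a vertex set `V` and two tail labels `τ, σ`, encoded as
`Bool` with `true = τ` and `false = σ`.  A hyperarc is a pair `(t, {a,b})`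
consisting of a tail label and an unordered pair of vertices; it is degenerate
if `a = b`.  A hypergraph is a finite set of pairwise distinct non-degenerate
hyperarcs; `H^stub_s(d)` is the set of such hypergraphs realizing the degree
sequence `d` (stub degree of each vertex and number of hyperarcs per tail).
`M(H0 Δ H*)` is the edge-labeled multigraph whose edges record the hyperarcs
of the symmetric difference together with the hypergraph (`lab`, `true = H0`)
containing them and their tail.
-/

/-- Tail labels: `true = τ`, `false = σ`. -/
abbrev Tail := Bool

/-- A hyperarc: a tail label together with an unordered pair of vertices. -/
abbrev Hyperarc (V : Type*) := Tail × Sym2 V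

/-- A (stub) degree sequence: the stub degree of every vertex together with the
number of hyperarcs carrying each tail label. -/
structure DegreeSeq (V : Type*) where
  vdeg : V → ℕ
  tdeg : Tail → ℕ

/-- `A` is a hypergraph in `H^stub_s(d)`: a set of pairwise distinct (this is
automatic for a `Finset`) non-degenerate hyperarcs realizing the degree
sequence `D`. -/
def Realizes {V : Type*} [DecidableEq V] (A : Finset (Hyperarc V)) (D : DegreeSeq V) : Prop :=
  (∀ e ∈ A, ¬ e.2.IsDiag) ∧
  (∀ v : V, (A.filter fun e => v ∈ e.2).card = D.vdeg v) ∧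
  (∀ t : Tail, (A.filter fun e => e.1 = t).card = D.tdeg t)

/-- An edge `{a,b}_{X,t}` of the multigraph `M(H0 Δ H*)`: its label (`true`
means it comes from `H0`, `false` from `H*`), its tail `t` and its endpoints
`{a,b}`. -/
structure MEdge (V : Type*) where
  lab : Bool
  tail : Tail
  ends : Sym2 V
deriving DecidableEq

/-- `M⁻¹`: the hyperarc underlying an edge of `M(H0 Δ H*)`. -/
def MEdge.arc {V : Type*} (e : MEdge V) : Hyperarc V := (e.tail, e.ends)

/-- The edge set of the edge-labeled multigraph `M(H0 Δ H*)`: every hyperarc of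
`A(H0) \ A(H*)` becomes an edge labeled `H0` (i.e. `true`) and every hyperarc of
`A(H*) \ A(H0)` becomes an edge labeled `H*` (i.e. `false`). -/
def mEdges {V : Type*} [DecidableEq V] (A0 A1 : Finset (Hyperarc V)) : Finset (MEdge V) :=
  ((A0 \ A1).image fun h => ⟨true, h.1, h.2⟩) ∪
    ((A1 \ A0).image fun h => ⟨false, h.1, h.2⟩)

/-- An alternating cycle in the edge set `E` of `M(H0 Δ H*)`: a closed trail
(cyclic sequence of pairwise distinct edges, consecutive edges sharing an
endpoint) whose edges alternate between label `H0` and label `H*`. -/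
structure AltCycle {V : Type*} (E : Finset (MEdge V)) where
  /-- the length of the cycle -/
  n : ℕ
  two_le : 2 ≤ n
  /-- the cyclic sequence of edges -/
  edge : ℕ → MEdge V
  /-- the cyclic sequence of vertices visited -/
  vert : ℕ → V
  edge_periodic : ∀ i, edge (i + n) = edge i
  vert_periodic : ∀ i, vert (i + n) = vert i
  mem : ∀ i, edge i ∈ E
  inj : ∀ i < n, ∀ j < n, edge i = edge j → i = j
  ends_eq : ∀ i, (edge i).ends = s(vert i, vert (i + 1))
  alt : ∀ i, (edge i).lab = !(edge (i + 1)).lab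

/-- The set of edges used by an alternating cycle. -/
def AltCycle.edges {V : Type*} [DecidableEq V] {E : Finset (MEdge V)} (C : AltCycle E) :
    Finset (MEdge V) :=
  (Finset.range C.n).image C.edge

/-- A minimal alternating cycle: one containing no proper alternating subcycle. -/
def AltCycle.Minimal {V : Type*} [DecidableEq V] {E : Finset (MEdge V)} (C : AltCycle E) : Prop :=
  ∀ C' : AltCycle E, C'.edges ⊆ C.edges → C'.edges = C.edges

/-- `|f_{X,t}(M(H0 Δ H*))|`: the number of edges of `M(H0 Δ H*)` labeled with
hypergraph `l` (`true = H0`) and tail `t`. -/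
def labTailCount {V : Type*} [DecidableEq V] (A0 A1 : Finset (Hyperarc V))
    (l : Bool) (t : Tail) : ℕ :=
  ((mEdges A0 A1).filter fun e => e.lab = l ∧ e.tail = t).card

/-- `H` and `H'` differ by a single hypershuffle move, i.e. they are adjacent in
`G(H^stub_s(d))`: their symmetric difference consists of 4 hyperarcs,
`M(H Δ H')` is an alternating cycle, and the number of tail-τ edges labeled `H`
equals the number of tail-τ edges labeled `H'`. -/
def HypershuffleAdj {V : Type*} [DecidableEq V] (A0 A1 : Finset (Hyperarc V)) : Prop :=
  ((A0 \ A1) ∪ (A1 \ A0)).card = 4 ∧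
  (∃ C : AltCycle (mEdges A0 A1), C.edges = mEdges A0 A1) ∧
  labTailCount A0 A1 true true = labTailCount A0 A1 false true

/-!
If `e6 = {f,c}_{H0,u}` were an edge of `M(H0 Δ H*)`, then `e2, e6, e5, e1` would close up into
the alternating 4-cycle `b → c → f → a → b`. Its edges lie in `C*`, so minimality of `C*` forces
them to be all of `C*`. But `e3 = {c,d}_{H0,s}` lies in `C*` and is none of these four edges,
since `d ∉ {a, b, f}`.
-/

namespace AltCycle

open Fin.NatCast

variable {V : Type*} {E : Finset (MEdge V)}

theorem edges_subset [DecidableEq V] (C : AltCycle E) : C.edges ⊆ E := by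
  intro e he
  obtain ⟨i, -, rfl⟩ := Finset.mem_image.1 he
  exact C.mem i

def ofFn (n : ℕ) [NeZero n] (hn : 2 ≤ n) (edge : Fin n → MEdge V) (vert : Fin n → V)
    (mem : ∀ i, edge i ∈ E) (inj : Function.Injective edge)
    (ends_eq : ∀ i, (edge i).ends = s(vert i, vert (i + 1)))
    (alt : ∀ i, (edge i).lab = !(edge (i + 1)).lab) : AltCycle E where
  n := n
  two_le := hn
  edge i := edge (i : Fin n)
  vert i := vert (i : Fin n)
  edge_periodic i := by simp
  vert_periodic i := by simp
  mem i := mem _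
  inj i hi j hj hij := by
    have := congrArg Fin.val (inj hij)
    rwa [Fin.val_natCast, Fin.val_natCast, Nat.mod_eq_of_lt hi, Nat.mod_eq_of_lt hj] at this
  ends_eq i := by simpa using ends_eq i
  alt i := by simpa using alt i

theorem mem_edges_ofFn [DecidableEq V] {n : ℕ} [NeZero n] {hn : 2 ≤ n}
    {edge : Fin n → MEdge V} {vert : Fin n → V} {mem : ∀ i, edge i ∈ E}
    {inj : Function.Injective edge} {ends_eq : ∀ i, (edge i).ends = s(vert i, vert (i + 1))}
    {alt : ∀ i, (edge i).lab = !(edge (i + 1)).lab} {e : MEdge V} :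
    e ∈ (ofFn n hn edge vert mem inj ends_eq alt).edges ↔ ∃ i, edge i = e := by
  simp only [edges, ofFn, Finset.mem_image, Finset.mem_range]
  constructor
  · rintro ⟨i, -, rfl⟩
    exact ⟨_, rfl⟩
  · rintro ⟨i, rfl⟩
    exact ⟨i, i.isLt, by simp⟩

end AltCycle

theorem case_4_3_impossible_general {V : Type*} [DecidableEq V]
    (A0 A1 : Finset (Hyperarc V))
    (C : AltCycle (mEdges A0 A1)) (hmin : C.Minimal) (hall : C.edges = mEdges A0 A1)
    (a b c d f : V) (t s u : Tail)
    (hdist : ([a, b, c, d, f] : List V).Pairwise (· ≠ ·))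
    (he1 : (⟨true, t, s(a, b)⟩ : MEdge V) ∈ C.edges)
    (he2 : (⟨false, t, s(b, c)⟩ : MEdge V) ∈ C.edges)
    (he3 : (⟨true, s, s(c, d)⟩ : MEdge V) ∈ C.edges)
    (he5 : (⟨false, u, s(a, f)⟩ : MEdge V) ∈ C.edges) :
    (u, s(f, c)) ∉ A0 \ A1 := by
  simp only [List.pairwise_cons, List.mem_cons, List.not_mem_nil, List.Pairwise.nil,
    forall_eq_or_imp, IsEmpty.forall_iff, implies_true, and_true] at hdist
  obtain ⟨⟨hab, hac, had, haf⟩, ⟨hbc, hbd, hbf⟩, ⟨hcd, hcf⟩, hdf⟩ := hdist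
  intro h6
  rw [hall] at he1 he2 he5
  have he6 : (⟨true, u, s(f, c)⟩ : MEdge V) ∈ mEdges A0 A1 :=
    Finset.mem_union_left _ (Finset.mem_image.2 ⟨_, h6, rfl⟩)
  let square : AltCycle (mEdges A0 A1) :=
    AltCycle.ofFn 4 (by norm_num)
      ![⟨false, t, s(b, c)⟩, ⟨true, u, s(f, c)⟩, ⟨false, u, s(a, f)⟩, ⟨true, t, s(a, b)⟩]
      ![b, c, f, a]
      (fun i => by fin_cases i; exacts [he2, he6, he5, he1])
      (by intro i j h; fin_cases i <;> fin_cases j <;> simp at h ⊢ <;> grind)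
      (fun i => by fin_cases i <;> simp [Sym2.eq_swap])
      (fun i => by fin_cases i <;> rfl)
  have hsquare : square.edges = C.edges :=
    hmin square (square.edges_subset.trans hall.ge)
  obtain ⟨i, hi⟩ := AltCycle.mem_edges_ofFn.1 (hsquare ▸ he3)
  fin_cases i <;> simp_all

/-- Case 4.3 of the proof of Lemma `connected_when_one_cycle`
cannot occur.  `M(H0 Δ H*)` is exactly one minimal alternating cycle `C*`
containing `e1 = {a,b}_{H0,t}`, `e2 = {b,c}_{H*,t}`, `e3 = {c,d}_{H0,s}`,
`e4 = {a,d}_{H0,s}` and `e5 = {a,f}_{H*,u}` with `a,b,c,d,f` pairwise distinct.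
Then `M(H0 Δ H*)` does not contain the edge `e6 = {f,c}_{H0,u}`, i.e.
`(u,{f,c}) ∉ A(H0) \ A(H*)`. -/
theorem case_4_3_impossible {V : Type*} [DecidableEq V]
    (D : DegreeSeq V) (A0 A1 : Finset (Hyperarc V))
    (h0 : Realizes A0 D) (h1 : Realizes A1 D)
    (C : AltCycle (mEdges A0 A1)) (hmin : C.Minimal) (hall : C.edges = mEdges A0 A1)
    (a b c d f : V) (t s u : Tail)
    (hdist : ([a, b, c, d, f] : List V).Pairwise (· ≠ ·))
    (he1 : (⟨true, t, s(a, b)⟩ : MEdge V) ∈ C.edges)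
    (he2 : (⟨false, t, s(b, c)⟩ : MEdge V) ∈ C.edges)
    (he3 : (⟨true, s, s(c, d)⟩ : MEdge V) ∈ C.edges)
    (he4 : (⟨true, s, s(a, d)⟩ : MEdge V) ∈ C.edges)
    (he5 : (⟨false, u, s(a, f)⟩ : MEdge V) ∈ C.edges) :
    (u, s(f, c)) ∉ A0 \ A1 :=
  case_4_3_impossible_general A0 A1 C hmin hall a b c d f t s u hdist he1 he2 he3 he5
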